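/- arXiv:1112.5788 — 7 statements merged into one kernel-verified Lean document; each statement's English description precedes it below -/
import Mathlib

section
/- Let Γ be a discrete, cocompact, torsion-free subgroup of SL(2,ℝ). Then the web of bisectors ℒ = ⋃_{λ ∈ Λ, λ ≠ o} L_λ is a closed set with empty interior, its complement satisfies ℍ \ ℒ = ⋃_{k ≥ 1} Int(B_k), and consequently the union over all integers k ≥ 1 of the interiors of the Brillouin sets B_k is dense in ℍ. -/
noncomputable section

open UpperHalfPlane MeasureTheory Topology Filter Metric Set Pointwise

local notation "SL2R" => Matrix.SpecialLinearGroup (Fin 2) ℝ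

/-- The matrix topology on `SL(2,ℝ)`, induced from the space of `2 × 2` real matrices. -/
instance : TopologicalSpace SL2R :=
  TopologicalSpace.induced (fun g => (g : Matrix (Fin 2) (Fin 2) ℝ)) inferInstance

/-- A monoid is torsion-free if no element other than `1` has finite order
(the definition `Monoid.IsTorsionFree` of the older Mathlib, restated verbatim). -/
def Monoid.IsTorsionFree (G : Type*) [Monoid G] : Prop :=
  ∀ g : G, g ≠ 1 → ¬IsOfFinOrder g

/-- The basepoint `o = i` of the upper half-plane. -/
def o : ℍ := UpperHalfPlane.I

/-- A subgroup of `SL(2,ℝ)` is cocompact if the translates of some compact set cover `ℍ`. -/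
def IsCocompact (Γ : Subgroup SL2R) : Prop :=
  ∃ K : Set ℍ, IsCompact K ∧ ⋃ γ : Γ, (γ : SL2R) • K = Set.univ

/-- The orbit `Λ = Γ • o` of the basepoint. -/
def orbitO (Γ : Subgroup SL2R) : Set ℍ := {z : ℍ | ∃ γ ∈ Γ, γ • o = z}

/-- The focal counting function `υ(z) = #{λ ∈ Λ | λ ≠ o, d(z,λ) = d(z,o)}`. -/
def upsilon (Γ : Subgroup SL2R) (z : ℍ) : ℕ :=
  {l : ℍ | l ∈ orbitO Γ ∧ l ≠ o ∧ dist z l = dist z o}.ncard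

/-- The Brillouin index `B(z) = #{λ ∈ Λ | d(z,λ) ≤ d(z,o)}`. -/
def brillouinIndex (Γ : Subgroup SL2R) (z : ℍ) : ℕ :=
  {l : ℍ | l ∈ orbitO Γ ∧ dist z l ≤ dist z o}.ncard

/-- The `k`-th Brillouin set `B_k = {z | B(z) = k}`. -/
def brillouinSet (Γ : Subgroup SL2R) (k : ℕ) : Set ℍ := {z : ℍ | brillouinIndex Γ z = k}

/-- The perpendicular bisector `L_λ = {z | d(z,o) = d(z,λ)}`. -/
def bisector (l : ℍ) : Set ℍ := {z : ℍ | dist z o = dist z l}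

/-- The web of bisectors `ℒ = ⋃_{λ ∈ Λ, λ ≠ o} L_λ`. -/
def web (Γ : Subgroup SL2R) : Set ℍ :=
  ⋃ l ∈ {l : ℍ | l ∈ orbitO Γ ∧ l ≠ o}, bisector l

/-!
Discreteness of `Γ` makes the orbit `Λ` locally finite, so near a point `z` only finitely many
bisectors matter and the Brillouin index can only drop: `B(w) ≤ B(z)` for `w` near `z`, with
equality near `z` when `z` is off the web. If `z` lies on a bisector `L_λ`, then moving from `z`
towards `o` along the geodesic puts `λ` strictly farther than `o`, so `B` takes smaller values
arbitrarily close to `z`. Hence the web is exactly where `B` fails to be locally constant, and it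
has empty interior because `B` would be locally constant at a point of that interior where it
attains its minimum there.
-/

lemma interior_eq_empty_of_frequently_lt {X : Type*} [TopologicalSpace X] {f : X → ℕ}
    {s : Set X} (h : ∀ z ∈ s, ∃ᶠ w in 𝓝 z, f w < f z) : interior s = ∅ := by
  by_contra hne
  have hne : (interior s).Nonempty := nonempty_iff_ne_empty.mpr hne
  set z := Function.argminOn f (interior s) hne
  have hz : z ∈ interior s := Function.argminOn_mem f _ hne
  obtain ⟨w, hwz, hw⟩ :=
    ((h z (interior_subset hz)).and_eventually (isOpen_interior.mem_nhds hz)).exists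
  exact (Function.argminOn_le f _ hw).not_gt hwz

lemma eventually_dist_lt_dist {X : Type*} [PseudoMetricSpace X] {a b x : X}
    (h : dist x a < dist x b) : ∀ᶠ w in 𝓝 x, dist w a < dist w b :=
  (continuous_id.dist continuous_const).continuousAt.eventually_lt
    (continuous_id.dist continuous_const).continuousAt h

def bisectorSide (l z : ℍ) : ℝ :=
  (1 - l.im) * (z.re ^ 2 + z.im ^ 2) - 2 * l.re * z.re + (l.re ^ 2 + l.im ^ 2 - l.im)

lemma o_re : o.re = 0 := I_re

lemma o_im : o.im = 1 := I_im

lemma cosh_dist_sub_cosh_dist_o (z l : ℍ) :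
    Real.cosh (dist z l) - Real.cosh (dist z o) = bisectorSide l z / (2 * z.im * l.im) := by
  have := z.im_pos
  have := l.im_pos
  simp only [cosh_dist, Complex.dist_eq, Complex.sq_norm, Complex.normSq_apply, Complex.sub_re,
    Complex.sub_im, coe_re, coe_im, bisectorSide, o_re, o_im]
  field_simp
  ring

lemma bisectorSide_eq_zero_of_mem_bisector {z l : ℍ} (hz : z ∈ bisector l) :
    bisectorSide l z = 0 := by
  have h := cosh_dist_sub_cosh_dist_o z l
  rw [← show dist z o = dist z l from hz, sub_self, eq_comm, div_eq_zero_iff] at h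
  exact h.resolve_right (by have := z.im_pos; have := l.im_pos; positivity)

lemma dist_o_lt_of_bisectorSide_pos {z l : ℍ} (h : 0 < bisectorSide l z) :
    dist z o < dist z l := by
  have hdiff := cosh_dist_sub_cosh_dist_o z l
  have : 0 < bisectorSide l z / (2 * z.im * l.im) := by
    have := z.im_pos; have := l.im_pos; positivity
  have h := Real.cosh_lt_cosh.mp (by linarith : Real.cosh (dist z o) < Real.cosh (dist z l))
  rwa [abs_of_nonneg dist_nonneg, abs_of_nonneg dist_nonneg] at h

lemma bisectorSide_o_pos {l : ℍ} (hl : l ≠ o) : 0 < bisectorSide l o := by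
  have hside : bisectorSide l o = l.re ^ 2 + (l.im - 1) ^ 2 := by
    simp only [bisectorSide, o_re, o_im]
    ring
  refine hside ▸ lt_of_le_of_ne (by positivity) fun h => hl (ext_re_im ?_ ?_)
  · rw [o_re]; nlinarith
  · rw [o_im]; nlinarith

/-- The geodesic from `o` (at `t = 0`) to `z` (at `t = 1`), parametrized so that `w.re` and
`w.re ^ 2 + w.im ^ 2` are affine in `t`. -/
def geodesicFromO (z : ℍ) (t : ℝ) : ℂ :=
  ↑(t * z.re) + ↑√(t * (z.re ^ 2 + z.im ^ 2) + (1 - t) - (t * z.re) ^ 2) * Complex.I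

lemma im_geodesicFromO_pos (z : ℍ) {t : ℝ} (ht0 : 0 < t) (ht1 : t < 1) :
    0 < (geodesicFromO z t).im := by
  have := z.im_pos
  simp only [geodesicFromO, Complex.add_im, Complex.ofReal_im, Complex.mul_im, Complex.I_im,
    Complex.I_re, Complex.ofReal_re, mul_one, mul_zero, zero_add, add_zero]
  exact Real.sqrt_pos.mpr (by nlinarith [mul_pos ht0 (sub_pos.mpr ht1), sq_nonneg z.re])

lemma tendsto_geodesicFromO (z : ℍ) :
    Tendsto (fun t => ofComplex (geodesicFromO z t)) (𝓝[<] 1) (𝓝 z) := by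
  have hcont : Continuous (geodesicFromO z) := by unfold geodesicFromO; fun_prop
  have hend : geodesicFromO z 1 = z := by
    apply Complex.ext
    · simp [geodesicFromO]
    · simp [geodesicFromO, Real.sqrt_sq z.im_pos.le]
  have hof :=
    (ofComplex.continuousAt (x := (z : ℂ)) (by simpa [ofComplex] using z.im_pos)).tendsto
  rw [ofComplex_apply] at hof
  exact hof.comp (hend ▸ hcont.continuousWithinAt.tendsto)

lemma bisectorSide_geodesicFromO (l z : ℍ) {t : ℝ} (ht0 : 0 < t) (ht1 : t < 1) :
    bisectorSide l (ofComplex (geodesicFromO z t)) =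
      t * bisectorSide l z + (1 - t) * bisectorSide l o := by
  have him := im_geodesicFromO_pos z ht0 ht1
  have hre : (geodesicFromO z t).re = t * z.re := by simp [geodesicFromO]
  have him2 : (geodesicFromO z t).im ^ 2 =
      t * (z.re ^ 2 + z.im ^ 2) + (1 - t) - (t * z.re) ^ 2 := by
    simp only [geodesicFromO, Complex.add_im, Complex.ofReal_im, Complex.mul_im, Complex.I_im,
      Complex.I_re, Complex.ofReal_re, mul_one, mul_zero, zero_add, add_zero] at him ⊢
    exact Real.sq_sqrt (Real.sqrt_pos.mp him).le
  simp only [ofComplex_apply_of_im_pos him, bisectorSide, mk_re, mk_im, him2, hre, o_re, o_im]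
  ring

lemma frequently_dist_o_lt_of_mem_bisector {z l : ℍ} (hl : l ≠ o) (hz : z ∈ bisector l) :
    ∃ᶠ w in 𝓝 z, dist w o < dist w l := by
  refine (tendsto_geodesicFromO z).frequently (Eventually.frequently ?_)
  filter_upwards [Ioo_mem_nhdsLT zero_lt_one] with t ⟨ht0, ht1⟩
  apply dist_o_lt_of_bisectorSide_pos
  rw [bisectorSide_geodesicFromO l z ht0 ht1, bisectorSide_eq_zero_of_mem_bisector hz, mul_zero,
    zero_add]
  exact mul_pos (sub_pos.mpr ht1) (bisectorSide_o_pos hl)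

lemma o_mem_orbitO (Γ : Subgroup SL2R) : o ∈ orbitO Γ := ⟨1, Γ.one_mem, one_smul _ _⟩

lemma mem_web_iff {Γ : Subgroup SL2R} {z : ℍ} :
    z ∈ web Γ ↔ ∃ l ∈ orbitO Γ, l ≠ o ∧ z ∈ bisector l := by
  simp only [web, mem_iUnion, mem_ofPred_eq, exists_prop, and_assoc]

lemma finite_orbitO_inter_closedBall (Γ : Subgroup SL2R) [hΓ : DiscreteTopology Γ] (z : ℍ)
    (r : ℝ) :
    {l | l ∈ orbitO Γ ∧ dist z l ≤ r}.Finite := by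
  have := @instProperlyDiscontinuousSL2RSubgroup Γ hΓ
  have hfin : {γ : Γ | ((γ • ·) '' {o} ∩ closedBall z r).Nonempty}.Finite :=
    ProperlyDiscontinuousSMul.finite_disjoint_inter_image isCompact_singleton
      (isCompact_closedBall z r)
  refine (hfin.image fun γ => γ • o).subset ?_
  rintro l ⟨⟨γ, hγ, rfl⟩, hl⟩
  exact ⟨⟨γ, hγ⟩, ⟨γ • o, by simp, by rwa [mem_closedBall, dist_comm]⟩, rfl⟩

def brillouinPoints (Γ : Subgroup SL2R) (z : ℍ) : Set ℍ :=
  {l | l ∈ orbitO Γ ∧ dist z l ≤ dist z o}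

lemma brillouinIndex_eq_ncard (Γ : Subgroup SL2R) (z : ℍ) :
    brillouinIndex Γ z = (brillouinPoints Γ z).ncard := rfl

lemma o_mem_brillouinPoints (Γ : Subgroup SL2R) (z : ℍ) : o ∈ brillouinPoints Γ z :=
  ⟨o_mem_orbitO Γ, le_rfl⟩

section Discrete

variable {Γ : Subgroup SL2R} [DiscreteTopology Γ]

lemma finite_brillouinPoints (z : ℍ) : (brillouinPoints Γ z).Finite :=
  finite_orbitO_inter_closedBall Γ z _

lemma one_le_brillouinIndex (z : ℍ) : 1 ≤ brillouinIndex Γ z :=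
  (Set.ncard_pos (finite_brillouinPoints z)).mpr ⟨o, o_mem_brillouinPoints Γ z⟩

lemma eventually_brillouinPoints_subset (z : ℍ) :
    ∀ᶠ w in 𝓝 z, brillouinPoints Γ w ⊆ brillouinPoints Γ z := by
  have hnear : ∀ᶠ w in 𝓝 z, dist w z < 1 := ball_mem_nhds z one_pos
  -- only the finitely many `l` with `d(z, l) ≤ d(z, o) + 2` can enter `brillouinPoints Γ w`
  have hfar : ∀ᶠ w in 𝓝 z, ∀ l ∈ {l | l ∈ orbitO Γ ∧ dist z l ≤ dist z o + 2},
      l ∈ brillouinPoints Γ w → l ∈ brillouinPoints Γ z := by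
    refine (eventually_all_finite (finite_orbitO_inter_closedBall Γ z _)).mpr fun l hl => ?_
    by_cases hlz : dist z l ≤ dist z o
    · exact Eventually.of_forall fun _ _ => ⟨hl.1, hlz⟩
    · filter_upwards [eventually_dist_lt_dist (not_le.mp hlz)] with w hw hlw
      exact absurd hlw.2 (not_le.mpr hw)
  filter_upwards [hnear, hfar] with w hw hwfar l hl
  refine hwfar l ⟨hl.1, ?_⟩ hl
  linarith [dist_triangle z w l, dist_triangle w z o, dist_comm z w, hl.2]

lemma eventually_subset_brillouinPoints_of_notMem_web {z : ℍ} (hz : z ∉ web Γ) :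
    ∀ᶠ w in 𝓝 z, brillouinPoints Γ z ⊆ brillouinPoints Γ w := by
  refine (eventually_all_finite (finite_brillouinPoints z)).mpr fun l hl => ?_
  by_cases hlo : l = o
  · exact Eventually.of_forall fun w => hlo ▸ o_mem_brillouinPoints Γ w
  · have hlt : dist z l < dist z o :=
      hl.2.lt_of_ne fun h => hz (mem_web_iff.mpr ⟨l, hl.1, hlo, h.symm⟩)
    filter_upwards [eventually_dist_lt_dist hlt] with w hw
    exact ⟨hl.1, hw.le⟩

lemma eventually_brillouinIndex_eq_of_notMem_web {z : ℍ} (hz : z ∉ web Γ) :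
    ∀ᶠ w in 𝓝 z, brillouinIndex Γ w = brillouinIndex Γ z := by
  filter_upwards [eventually_brillouinPoints_subset (Γ := Γ) z,
    eventually_subset_brillouinPoints_of_notMem_web hz] with w h₁ h₂
  rw [brillouinIndex_eq_ncard, brillouinIndex_eq_ncard, h₁.antisymm h₂]

lemma frequently_brillouinIndex_lt_of_mem_web {z : ℍ} (hz : z ∈ web Γ) :
    ∃ᶠ w in 𝓝 z, brillouinIndex Γ w < brillouinIndex Γ z := by
  obtain ⟨l, hlΛ, hlo, hzl⟩ := mem_web_iff.mp hz
  refine ((frequently_dist_o_lt_of_mem_bisector hlo hzl).and_eventually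
    (eventually_brillouinPoints_subset (Γ := Γ) z)).mono fun w ⟨hwl, hsub⟩ => ?_
  refine Set.ncard_lt_ncard ((ssubset_iff_of_subset hsub).mpr ⟨l, ⟨hlΛ, hzl.symm.le⟩, ?_⟩)
    (finite_brillouinPoints z)
  exact fun hl => (not_le.mpr hwl) hl.2

end Discrete

lemma compl_web_eq_iUnion_interior_brillouinSet (Γ : Subgroup SL2R) [DiscreteTopology Γ] :
    (web Γ)ᶜ = ⋃ k ∈ {k : ℕ | 1 ≤ k}, interior (brillouinSet Γ k) := by
  ext z
  simp only [mem_compl_iff, mem_iUnion, mem_ofPred_eq, exists_prop, mem_interior_iff_mem_nhds]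
  constructor
  · exact fun hz => ⟨_, one_le_brillouinIndex z, eventually_brillouinIndex_eq_of_notMem_web hz⟩
  · rintro ⟨k, -, hk⟩ hz
    obtain ⟨w, hlt, hw⟩ :=
      ((frequently_brillouinIndex_lt_of_mem_web hz).and_eventually hk).exists
    exact hlt.ne (hw.trans (mem_of_mem_nhds hk).symm)

theorem web_closed_nowhere_dense_and_brillouin_interiors_dense_general
    (Γ : Subgroup SL2R)
    (hdisc : DiscreteTopology Γ) :
    IsClosed (web Γ) ∧ interior (web Γ) = ∅ ∧
    (web Γ)ᶜ = ⋃ k ∈ {k : ℕ | 1 ≤ k}, interior (brillouinSet Γ k) ∧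
    Dense (⋃ k ∈ {k : ℕ | 1 ≤ k}, interior (brillouinSet Γ k)) := by
  have hcompl := compl_web_eq_iUnion_interior_brillouinSet Γ
  have hint : interior (web Γ) = ∅ :=
    interior_eq_empty_of_frequently_lt fun _ => frequently_brillouinIndex_lt_of_mem_web
  refine ⟨?_, hint, hcompl, hcompl ▸ interior_eq_empty_iff_dense_compl.mp hint⟩
  exact isOpen_compl_iff.mp (hcompl ▸ isOpen_biUnion fun _ _ => isOpen_interior)

/-- The web of bisectors is closed and nowhere dense, its complement is the union of the
interiors of the Brillouin sets, and hence that union is dense in `ℍ`. -/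
theorem web_closed_nowhere_dense_and_brillouin_interiors_dense
    (Γ : Subgroup SL2R)
    (hdisc : DiscreteTopology Γ) (hcc : IsCocompact Γ) (htf : Monoid.IsTorsionFree Γ) :
    IsClosed (web Γ) ∧ interior (web Γ) = ∅ ∧
    (web Γ)ᶜ = ⋃ k ∈ {k : ℕ | 1 ≤ k}, interior (brillouinSet Γ k) ∧
    Dense (⋃ k ∈ {k : ℕ | 1 ≤ k}, interior (brillouinSet Γ k)) :=
  web_closed_nowhere_dense_and_brillouin_interiors_dense_general Γ hdisc
end
end

section
/- For every λ ∈ ℍ with λ ≠ o, the distance from o to the bisector L_λ equals half the distance from o to λ: inf{d(o,z) : z ∈ L_λ} = d(o,λ)/2, and this infimum is attained at the unique midpoint m of o and λ, i.e., the point m with d(o,m) = d(m,λ) = d(o,λ)/2. -/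
/-!
Taking `cosh`, the equation `d(z, w) = r` becomes a polynomial identity in the coordinates of `z`
and `w`. For the base point `I` this makes the midpoint of `I` and `q` explicit, and for any other
candidate `m` a combination of the two distance equations is a vanishing sum of two squares, which
pins `m` down. The isometric, transitive action of `SL(2, ℝ)` carries this to any pair of points.
The infimum is then the triangle inequality: a point `z` of the bisector has
`2 d(o, z) = d(o, z) + d(z, λ) ≥ d(o, λ)`, with equality at the midpoint.
-/

noncomputable section

open UpperHalfPlane MeasureTheory Topology Filter Metric Set Pointwise

local notation "SL2R" => Matrix.SpecialLinearGroup (Fin 2) ℝ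

open Real

theorem isLeast_dist_equidistant {α : Type*} [PseudoMetricSpace α] {a b m : α}
    (ham : dist a m = dist a b / 2) (hmb : dist m b = dist a b / 2) :
    IsLeast (dist a '' {z | dist z a = dist z b}) (dist a b / 2) := by
  refine ⟨⟨m, by simp only [mem_ofPred_eq, dist_comm m a, ham, hmb], ham⟩, ?_⟩
  rintro _ ⟨z, hz, rfl⟩
  have := dist_triangle a z b
  rw [mem_ofPred_eq, dist_comm z a] at hz
  linarith

namespace UpperHalfPlane

theorem dist_eq_iff_eq_cosh {z w : ℍ} {r : ℝ} (hr : 0 ≤ r) :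
    dist z w = r ↔ (z.re - w.re) ^ 2 + z.im ^ 2 + w.im ^ 2 = 2 * z.im * w.im * cosh r := by
  rw [← cosh_injOn.eq_iff dist_nonneg hr, cosh_dist', div_eq_iff (by positivity), mul_comm]

theorem four_mul_im_mul_cosh_half_dist_I_sq (q : ℍ) :
    4 * q.im * cosh (dist I q / 2) ^ 2 = q.re ^ 2 + (1 + q.im) ^ 2 := by
  have h := cosh_dist' I q
  rw [← mul_div_cancel₀ (dist I q) (two_ne_zero' ℝ), cosh_two_mul, I_re, I_im,
    eq_div_iff (by have := q.im_pos; positivity)] at h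
  linear_combination h + 2 * q.im * cosh_sq_sub_sinh_sq (dist I q / 2)

/-- The hyperbolic circles of radius `d(I, q) / 2` about `I` and `q` are Euclidean circles, tangent
at this point, which divides the segment between their Euclidean centres in the ratio `1 : q.im`. -/
def midpointI (q : ℍ) : ℍ :=
  ⟨⟨q.re / (1 + q.im), 2 * q.im * cosh (dist I q / 2) / (1 + q.im)⟩, by
    have := q.im_pos; positivity⟩

theorem midpointI_re (q : ℍ) : (midpointI q).re = q.re / (1 + q.im) := rfl

theorem midpointI_im (q : ℍ) :
    (midpointI q).im = 2 * q.im * cosh (dist I q / 2) / (1 + q.im) := rfl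

theorem dist_I_midpointI (q : ℍ) : dist I (midpointI q) = dist I q / 2 := by
  have := q.im_pos
  rw [dist_eq_iff_eq_cosh (by positivity), midpointI_re, midpointI_im, I_re, I_im]
  field_simp
  linear_combination -four_mul_im_mul_cosh_half_dist_I_sq q

theorem dist_midpointI (q : ℍ) : dist (midpointI q) q = dist I q / 2 := by
  have := q.im_pos
  rw [dist_eq_iff_eq_cosh (by positivity), midpointI_re, midpointI_im]
  field_simp
  linear_combination -q.im ^ 2 * four_mul_im_mul_cosh_half_dist_I_sq q

theorem eq_midpointI {q m : ℍ} (hIm : dist I m = dist I q / 2) (hmq : dist m q = dist I q / 2) :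
    m = midpointI q := by
  have := q.im_pos
  rw [dist_eq_iff_eq_cosh (by positivity)] at hIm hmq
  rw [I_re, I_im] at hIm
  set C := cosh (dist I q / 2)
  have hsum : ((1 + q.im) * m.re - q.re) ^ 2 + ((1 + q.im) * m.im - 2 * q.im * C) ^ 2 = 0 := by
    linear_combination (q.im * (1 + q.im)) * hIm + (1 + q.im) * hmq
      + q.im * four_mul_im_mul_cosh_half_dist_I_sq q
  have hre : (1 + q.im) * m.re - q.re = 0 := by nlinarith
  have him : (1 + q.im) * m.im - 2 * q.im * C = 0 := by nlinarith
  apply ext_re_im <;> [rw [midpointI_re]; rw [midpointI_im]] <;> field_simp <;> linarith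

theorem existsUnique_midpoint (p q : ℍ) :
    ∃! m : ℍ, dist p m = dist p q / 2 ∧ dist m q = dist p q / 2 := by
  obtain ⟨g, rfl⟩ := MulAction.exists_smul_eq SL2R I p
  obtain ⟨q, rfl⟩ := MulAction.surjective g q
  refine (MulAction.toPerm g).existsUnique_congr_right.mp ?_
  simp only [MulAction.toPerm_apply, dist_smul]
  exact ⟨midpointI q, ⟨dist_I_midpointI q, dist_midpointI q⟩, fun m h => eq_midpointI h.1 h.2⟩

end UpperHalfPlane

theorem dist_to_bisector_eq_half_general
    (l : ℍ) :
    sInf (dist o '' bisector l) = dist o l / 2 ∧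
    ∃ m : ℍ, m ∈ bisector l ∧ dist o m = dist o l / 2 ∧ dist m l = dist o l / 2 ∧
      ∀ m' : ℍ, dist o m' = dist o l / 2 ∧ dist m' l = dist o l / 2 → m' = m := by
  obtain ⟨m, ⟨hom, hml⟩, huniq⟩ := existsUnique_midpoint o l
  refine ⟨(isLeast_dist_equidistant hom hml).csInf_eq, m, ?_, hom, hml, huniq⟩
  rw [bisector, mem_ofPred_eq, dist_comm m o, hom, hml]

/-- The distance from `o` to the bisector `L_λ` is `d(o,λ)/2`, and it is attained exactly at
the unique midpoint `m` of `o` and `λ`. -/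
theorem dist_to_bisector_eq_half
    (l : ℍ) (hl : l ≠ o) :
    sInf (dist o '' bisector l) = dist o l / 2 ∧
    ∃ m : ℍ, m ∈ bisector l ∧ dist o m = dist o l / 2 ∧ dist m l = dist o l / 2 ∧
      ∀ m' : ℍ, dist o m' = dist o l / 2 ∧ dist m' l = dist o l / 2 → m' = m :=
  dist_to_bisector_eq_half_general l
end
end

section
/- For every λ ∈ ℍ with λ ≠ o, the complement ℍ \ L_λ has exactly two connected components, one containing o and one containing λ; and a point z ∈ ℍ \ L_λ lies in the component containing λ (equivalently, L_λ separates o from z) if and only if d(z,λ) < d(z,o). -/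
noncomputable section

open UpperHalfPlane MeasureTheory Topology Filter Metric Set Pointwise

local notation "SL2R" => Matrix.SpecialLinearGroup (Fin 2) ℝ

/-!
A point not on `L_λ` is strictly closer either to `o` or to `λ`, so `ℍ \ L_λ` splits into the two
open sets `{d(z,o) < d(z,λ)}` and `{d(z,λ) < d(z,o)}`. Each is star-shaped along geodesics: if
`d(z,q) < d(z,p)` and `x` lies on the geodesic segment from `z` to `q`, then
`d(x,q) = d(z,q) - d(z,x) < d(z,p) - d(z,x) ≤ d(x,p)`. Hence both are path-connected, and being
disjoint and open they are exactly the components of `ℍ \ L_λ` through `o` and `λ`.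
-/

theorem connectedComponentIn_union_eq_left {X : Type*} [TopologicalSpace X] {A B : Set X} {x : X}
    (hA : IsOpen A) (hB : IsOpen B) (hAB : Disjoint A B) (hA' : IsPreconnected A) (hx : x ∈ A) :
    connectedComponentIn (A ∪ B) x = A := by
  refine subset_antisymm ?_ (hA'.subset_connectedComponentIn hx subset_union_left)
  rcases isPreconnected_connectedComponentIn.subset_or_subset hA hB hAB
    (connectedComponentIn_subset _ _) with h | h
  · exact h
  · exact absurd (h (mem_connectedComponentIn (Or.inl hx))) (hAB.notMem_of_mem_left hx)

theorem Isometry.joinedIn_setOf_dist_lt {X : Type*} [PseudoMetricSpace X] {γ : ℝ → X}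
    (hγ : Isometry γ) {a b : ℝ} {p : X} (h : dist (γ a) (γ b) < dist (γ a) p) :
    JoinedIn {x | dist x (γ b) < dist x p} (γ a) (γ b) := by
  have hsub : γ '' segment ℝ a b ⊆ {x | dist x (γ b) < dist x p} := by
    rintro _ ⟨s, hs, rfl⟩
    have hsplit : dist (γ a) (γ s) + dist (γ s) (γ b) = dist (γ a) (γ b) := by
      simpa only [hγ.dist_eq] using dist_add_dist_of_mem_segment hs
    show dist (γ s) (γ b) < dist (γ s) p
    linarith [dist_triangle (γ a) (γ s) p]
  have hpc := ((convex_segment a b).isPathConnected ⟨a, left_mem_segment ℝ a b⟩).image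
    hγ.continuous
  exact (hpc.joinedIn _ (mem_image_of_mem γ (left_mem_segment ℝ a b)) _
    (mem_image_of_mem γ (right_mem_segment ℝ a b))).mono hsub

namespace UpperHalfPlane

/-- The geodesic along the half-circle of center `c ∈ ℝ` and radius `r`, by hyperbolic arc
length. -/
def circleGeodesic (c r : ℝ) (hr : 0 < r) (s : ℝ) : ℍ :=
  mk ⟨c + r * Real.tanh s, r / Real.cosh s⟩ (div_pos hr (Real.cosh_pos s))

theorem isometry_circleGeodesic (c r : ℝ) (hr : 0 < r) : Isometry (circleGeodesic c r hr) := by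
  refine Isometry.of_dist_eq fun s t => ?_
  have hcosh : Real.cosh (dist (circleGeodesic c r hr s) (circleGeodesic c r hr t)) =
      Real.cosh (s - t) := by
    have hs := Real.cosh_pos s
    have ht := Real.cosh_pos t
    rw [cosh_dist, Real.cosh_sub, Complex.dist_eq_re_im, Real.sq_sqrt (by positivity)]
    simp only [circleGeodesic, mk_im, coe_mk, Real.tanh_eq_sinh_div_cosh]
    field_simp
    linear_combination (-r ^ 2 * Real.cosh t ^ 2) * Real.cosh_sq s +
      (-r ^ 2 * Real.cosh s ^ 2) * Real.cosh_sq t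
  have habs : |dist (circleGeodesic c r hr s) (circleGeodesic c r hr t)| = |s - t| :=
    Real.cosh_injOn (mem_Ici.mpr (abs_nonneg _)) (mem_Ici.mpr (abs_nonneg _))
      (by rw [Real.cosh_abs, Real.cosh_abs, hcosh])
  rw [Real.dist_eq, ← habs, abs_of_nonneg dist_nonneg]

theorem exists_circleGeodesic_eq {c r : ℝ} (hr : 0 < r) {z : ℍ}
    (hz : (z.re - c) ^ 2 + z.im ^ 2 = r ^ 2) : ∃ s, circleGeodesic c r hr s = z := by
  have him := z.im_pos
  refine ⟨Real.arsinh ((z.re - c) / z.im), ?_⟩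
  have hcosh : Real.cosh (Real.arsinh ((z.re - c) / z.im)) = r / z.im := by
    rw [Real.cosh_arsinh, show 1 + ((z.re - c) / z.im) ^ 2 = (r / z.im) ^ 2 by
      field_simp; linarith]
    exact Real.sqrt_sq (by positivity)
  refine ext_re_im ?_ ?_
  · simp only [circleGeodesic, mk_re, Real.tanh_eq_sinh_div_cosh, Real.sinh_arsinh, hcosh]
    field_simp
    ring
  · simp only [circleGeodesic, mk_im, hcosh]
    field_simp

theorem exists_isometry_apply_eq (z w : ℍ) :
    ∃ γ : ℝ → ℍ, Isometry γ ∧ ∃ a b, γ a = z ∧ γ b = w := by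
  rcases eq_or_ne z.re w.re with hre | hre
  · refine ⟨_, isometry_vertical_line z.re, Real.log z.im, Real.log w.im, ?_, ?_⟩
    · exact UpperHalfPlane.ext (Complex.ext rfl (Real.exp_log z.im_pos))
    · exact UpperHalfPlane.ext (Complex.ext hre (Real.exp_log w.im_pos))
  · -- `c ∈ ℝ` is Euclidean-equidistant from `z` and `w`, the center of the geodesic half-circle
    set c := (w.re ^ 2 + w.im ^ 2 - z.re ^ 2 - z.im ^ 2) / (2 * (w.re - z.re)) with hc
    have hzr : 0 < (z.re - c) ^ 2 + z.im ^ 2 := by positivity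
    set r := √((z.re - c) ^ 2 + z.im ^ 2)
    have hz : (z.re - c) ^ 2 + z.im ^ 2 = r ^ 2 := (Real.sq_sqrt hzr.le).symm
    have hw : (w.re - c) ^ 2 + w.im ^ 2 = r ^ 2 := by
      have : w.re - z.re ≠ 0 := sub_ne_zero.mpr hre.symm
      rw [← hz, hc]
      field_simp
      ring
    have hr : 0 < r := Real.sqrt_pos.mpr hzr
    obtain ⟨a, ha⟩ := exists_circleGeodesic_eq hr hz
    obtain ⟨b, hb⟩ := exists_circleGeodesic_eq hr hw
    exact ⟨_, isometry_circleGeodesic c r hr, a, b, ha, hb⟩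

theorem isPathConnected_setOf_dist_lt {p q : ℍ} (hpq : p ≠ q) :
    IsPathConnected {x | dist x q < dist x p} := by
  refine ⟨q, by simpa using dist_pos.mpr hpq.symm, fun {z} hz => ?_⟩
  obtain ⟨γ, hγ, a, b, rfl, rfl⟩ := exists_isometry_apply_eq z q
  exact (hγ.joinedIn_setOf_dist_lt hz).symm

end UpperHalfPlane

theorem compl_bisector (l : ℍ) :
    (bisector l)ᶜ = {z | dist z o < dist z l} ∪ {z | dist z l < dist z o} := by
  ext z
  exact ne_iff_lt_or_gt

/-- The complement of a bisector has exactly two connected components, one containing `o`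
and one containing `λ`; a point lies in the component of `λ` iff it is strictly closer to
`λ` than to `o`. -/
theorem bisector_complement_two_components
    (l : ℍ) (hl : l ≠ o) :
    o ∈ (bisector l)ᶜ ∧ l ∈ (bisector l)ᶜ ∧
    connectedComponentIn (bisector l)ᶜ o ≠ connectedComponentIn (bisector l)ᶜ l ∧
    connectedComponentIn (bisector l)ᶜ o ∪ connectedComponentIn (bisector l)ᶜ l =
      (bisector l)ᶜ ∧
    ∀ z ∈ (bisector l)ᶜ,
      (z ∈ connectedComponentIn (bisector l)ᶜ l ↔ dist z l < dist z o) := by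
  set A : Set ℍ := {z | dist z o < dist z l}
  set B : Set ℍ := {z | dist z l < dist z o}
  have hA : IsOpen A := isOpen_lt (by fun_prop) (by fun_prop)
  have hB : IsOpen B := isOpen_lt (by fun_prop) (by fun_prop)
  have hAB : Disjoint A B := disjoint_left.mpr fun _ hzA hzB => lt_asymm (α := ℝ) hzA hzB
  have hoA : o ∈ A := by simpa [A] using dist_pos.mpr hl.symm
  have hlB : l ∈ B := by simpa [B] using dist_pos.mpr hl
  have hcompA : connectedComponentIn (A ∪ B) o = A :=
    connectedComponentIn_union_eq_left hA hB hAB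
      (isPathConnected_setOf_dist_lt hl).isConnected.isPreconnected hoA
  have hcompB : connectedComponentIn (A ∪ B) l = B := by
    rw [union_comm]
    exact connectedComponentIn_union_eq_left hB hA hAB.symm
      (isPathConnected_setOf_dist_lt hl.symm).isConnected.isPreconnected hlB
  rw [compl_bisector, hcompA, hcompB]
  exact ⟨Or.inl hoA, Or.inr hlB, fun h => hAB.notMem_of_mem_left hoA (h ▸ hoA),
    rfl, fun z _ => Iff.rfl⟩
end
end

section
/- A bisector determines its defining point: if λ₁, λ₂ ∈ ℍ with λ₁ ≠ o and λ₂ ≠ o satisfy L_{λ₁} = L_{λ₂} (as subsets of ℍ), then λ₁ = λ₂. -/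
noncomputable section

open UpperHalfPlane MeasureTheory Topology Filter Metric Set Pointwise

local notation "SL2R" => Matrix.SpecialLinearGroup (Fin 2) ℝ

lemma key_alg (a b c e : ℝ) (hb : 0 < b) (he : 0 < e)
    (h1 : ¬(a = 0 ∧ b = 1)) (h2 : ¬(c = 0 ∧ e = 1))
    (H : ∀ x y : ℝ, 0 < y →
      ((b-1)*(x^2+y^2) + 2*a*x + (b - a^2 - b^2) = 0 ↔
       (e-1)*(x^2+y^2) + 2*c*x + (e - c^2 - e^2) = 0)) :
    a = c ∧ b = e := by
  by_cases hu : b = 1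
  · subst hu
    have ha : a ≠ 0 := fun h => h1 ⟨h, rfl⟩
    have P1 := (H (a/2) 1 one_pos).mp (by ring)
    have P2 := (H (a/2) 2 two_pos).mp (by ring)
    have he1 : e = 1 := by linear_combination (P2 - P1) / 3
    rw [he1] at P1
    have hc : c * (a - c) = 0 := by linear_combination P1
    rcases mul_eq_zero.mp hc with h | h
    · exact absurd ⟨h, he1⟩ h2
    · exact ⟨by linarith, he1.symm⟩
  · have hu' : b - 1 ≠ 0 := sub_ne_zero.mpr hu
    have hpos : (0:ℝ) < b * (a^2 + (b-1)^2) := by positivity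
    set R := Real.sqrt (b * (a^2 + (b-1)^2)) with hRdef
    have hRpos : 0 < R := Real.sqrt_pos.mpr hpos
    have hR2 : R ^ 2 = b * (a^2 + (b-1)^2) := Real.sq_sqrt hpos.le
    -- the three points
    have hy0 : (0:ℝ) < |R / (b-1)| := abs_pos.mpr (div_ne_zero hRpos.ne' hu')
    have hy1 : (0:ℝ) < |Real.sqrt 3 * R / (2*(b-1))| := by
      apply abs_pos.mpr
      apply div_ne_zero (mul_ne_zero (Real.sqrt_ne_zero'.mpr (by norm_num)) hRpos.ne')
      simpa using hu'
    have hs3 : Real.sqrt 3 ^ 2 = 3 := Real.sq_sqrt (by norm_num)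
    have hy0sq : |R / (b-1)| ^ 2 = R^2 / (b-1)^2 := by rw [sq_abs, div_pow]
    have hy1sq : |Real.sqrt 3 * R / (2*(b-1))| ^ 2 = 3 * R^2 / (4*(b-1)^2) := by
      rw [sq_abs, div_pow, mul_pow, hs3]; ring
    -- point 0 : x = -a/(b-1)
    have E0 := (H (-a/(b-1)) _ hy0).mp (by
      rw [hy0sq]
      have : (b-1) * ((-a/(b-1))^2 + R^2/(b-1)^2) + 2*a*(-a/(b-1)) + (b - a^2 - b^2)
          = (R^2 - b*(a^2+(b-1)^2))/(b-1) := by field_simp; ring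
      rw [this, hR2, sub_self, zero_div])
    have E1 := (H ((R/2 - a)/(b-1)) _ hy1).mp (by
      rw [hy1sq]
      have : (b-1) * (((R/2 - a)/(b-1))^2 + 3*R^2/(4*(b-1)^2)) + 2*a*((R/2 - a)/(b-1)) + (b - a^2 - b^2)
          = (R^2 - b*(a^2+(b-1)^2))/(b-1) := by field_simp; ring
      rw [this, hR2, sub_self, zero_div])
    have E2 := (H ((-(R/2) - a)/(b-1)) _ hy1).mp (by
      rw [hy1sq]
      have : (b-1) * (((-(R/2) - a)/(b-1))^2 + 3*R^2/(4*(b-1)^2)) + 2*a*((-(R/2) - a)/(b-1)) + (b - a^2 - b^2)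
          = (R^2 - b*(a^2+(b-1)^2))/(b-1) := by field_simp; ring
      rw [this, hR2, sub_self, zero_div])
    rw [hy0sq] at E0
    rw [hy1sq] at E1 E2
    -- cleared forms
    have F0 : (e-1)*(R^2 + a^2) - 2*c*(b-1)*a + (e - c^2 - e^2)*(b-1)^2 = 0 := by
      have hid : (e-1)*(R^2 + a^2) - 2*c*(b-1)*a + (e - c^2 - e^2)*(b-1)^2
          = (b-1)^2 * ((e-1) * ((-a/(b-1))^2 + R^2/(b-1)^2) + 2*c*(-a/(b-1)) + (e - c^2 - e^2)) := by
        field_simp; ring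
      rw [hid, E0, mul_zero]
    have F1 : (e-1)*(R^2 + a^2 - a*R) + 2*c*(b-1)*(R/2 - a) + (e - c^2 - e^2)*(b-1)^2 = 0 := by
      have hid : (e-1)*(R^2 + a^2 - a*R) + 2*c*(b-1)*(R/2 - a) + (e - c^2 - e^2)*(b-1)^2
          = (b-1)^2 * ((e-1) * (((R/2 - a)/(b-1))^2 + 3*R^2/(4*(b-1)^2)) + 2*c*((R/2 - a)/(b-1)) + (e - c^2 - e^2)) := by
        field_simp; ring
      rw [hid, E1, mul_zero]
    have F2 : (e-1)*(R^2 + a^2 + a*R) + 2*c*(b-1)*(-(R/2) - a) + (e - c^2 - e^2)*(b-1)^2 = 0 := by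
      have hid : (e-1)*(R^2 + a^2 + a*R) + 2*c*(b-1)*(-(R/2) - a) + (e - c^2 - e^2)*(b-1)^2
          = (b-1)^2 * ((e-1) * (((-(R/2) - a)/(b-1))^2 + 3*R^2/(4*(b-1)^2)) + 2*c*((-(R/2) - a)/(b-1)) + (e - c^2 - e^2)) := by
        field_simp; ring
      rw [hid, E2, mul_zero]
    have hq : c*(b-1) = (e-1)*a := by
      have hz : R * (2 * (c*(b-1) - (e-1)*a)) = 0 := by linear_combination F1 - F2
      rcases mul_eq_zero.mp hz with h | h
      · exact absurd h hRpos.ne'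
      · linarith
    by_cases hv : e = 1
    · rw [hv] at hq
      have : c = 0 := by
        have := mul_eq_zero.mp (by linarith [hq] : c * (b-1) = 0)
        rcases this with h | h
        · exact h
        · exact absurd h hu'
      exact absurd ⟨this, hv⟩ h2
    · have hv' : e - 1 ≠ 0 := sub_ne_zero.mpr hv
      have hbe : (e-1) * ((a^2 + (b-1)^2) * ((b-1) - (e-1))) = 0 := by
        linear_combination F0 - (e-1)*hR2 + (c*(b-1) + (e-1)*a + 2*a) * hq
      have hbe' : b = e := by
        rcases mul_eq_zero.mp hbe with h | h
        · exact absurd h hv'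
        · rcases mul_eq_zero.mp h with h' | h'
          · exact absurd h' (by positivity)
          · linarith
      refine ⟨?_, hbe'⟩
      have : c * (b-1) = a * (b-1) := by rw [hq, hbe']; ring
      exact (mul_right_cancel₀ hu' this).symm

lemma dist_sq_complex (z w : ℍ) : dist (z:ℂ) (w:ℂ) ^ 2 = (z.re - w.re)^2 + (z.im - w.im)^2 := by
  rw [Complex.dist_eq, Complex.sq_norm, Complex.normSq_sub]
  simp [Complex.normSq_apply, UpperHalfPlane.coe_re, UpperHalfPlane.coe_im]
  ring

lemma mem_bisector_iff (l z : ℍ) :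
    z ∈ bisector l ↔
      (l.im - 1) * (z.re ^ 2 + z.im ^ 2) + 2 * l.re * z.re + (l.im - l.re ^ 2 - l.im ^ 2) = 0 := by
  have hz : (0:ℝ) < z.im := z.im_pos
  have hl : (0:ℝ) < l.im := l.im_pos
  have hd1 : (0:ℝ) < 2 * Real.sqrt (z.im * o.im) := by
    have : (0:ℝ) < z.im * o.im := mul_pos hz o.im_pos
    positivity
  have hd2 : (0:ℝ) < 2 * Real.sqrt (z.im * l.im) := by
    have : (0:ℝ) < z.im * l.im := mul_pos hz hl
    positivity
  rw [bisector, mem_setOf_eq, UpperHalfPlane.dist_eq, UpperHalfPlane.dist_eq,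
    mul_right_inj' (two_ne_zero), Real.arsinh_injective.eq_iff, div_eq_div_iff hd1.ne' hd2.ne',
    ← sq_eq_sq₀ (by positivity) (by positivity)]
  rw [mul_pow, mul_pow, mul_pow, mul_pow, Real.sq_sqrt (mul_pos hz o.im_pos).le,
    Real.sq_sqrt (mul_pos hz hl).le, dist_sq_complex, dist_sq_complex]
  have ho_re : o.re = 0 := rfl
  have ho_im : o.im = 1 := rfl
  rw [ho_re, ho_im]
  constructor
  · intro H
    have h4 : (4 * z.im) * ((l.im - 1) * (z.re ^ 2 + z.im ^ 2) + 2 * l.re * z.re + (l.im - l.re ^ 2 - l.im ^ 2)) = 0 := by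
      linear_combination H
    rcases mul_eq_zero.mp h4 with h | h
    · exact absurd h (by positivity)
    · exact h
  · intro H
    linear_combination (4 * z.im) * H

/-- A bisector determines its defining point. -/
theorem bisector_injective
    (l₁ l₂ : ℍ) (h₁ : l₁ ≠ o) (h₂ : l₂ ≠ o)
    (h : bisector l₁ = bisector l₂) : l₁ = l₂ := by
  have ho_re : o.re = 0 := rfl
  have ho_im : o.im = 1 := rfl
  have h1' : ¬(l₁.re = 0 ∧ l₁.im = 1) := by
    rintro ⟨hr, hi⟩
    exact h₁ (UpperHalfPlane.ext' (by rw [hr, ho_re]) (by rw [hi, ho_im]))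
  have h2' : ¬(l₂.re = 0 ∧ l₂.im = 1) := by
    rintro ⟨hr, hi⟩
    exact h₂ (UpperHalfPlane.ext' (by rw [hr, ho_re]) (by rw [hi, ho_im]))
  have H : ∀ x y : ℝ, 0 < y →
      ((l₁.im-1)*(x^2+y^2) + 2*l₁.re*x + (l₁.im - l₁.re^2 - l₁.im^2) = 0 ↔
       (l₂.im-1)*(x^2+y^2) + 2*l₂.re*x + (l₂.im - l₂.re^2 - l₂.im^2) = 0) := by
    intro x y hy
    set z : ℍ := ⟨⟨x, y⟩, hy⟩ with hz
    have hzre : z.re = x := rfl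
    have hzim : z.im = y := rfl
    have := (mem_bisector_iff l₁ z).symm.trans ((by rw [h] : z ∈ bisector l₁ ↔ z ∈ bisector l₂).trans (mem_bisector_iff l₂ z))
    rw [hzre, hzim] at this
    exact this
  obtain ⟨hre, him⟩ := key_alg l₁.re l₁.im l₂.re l₂.im l₁.im_pos l₂.im_pos h1' h2' H
  exact UpperHalfPlane.ext' hre him
end
end

section
/- Let Γ₁ and Γ₂ be discrete, cocompact, torsion-free subgroups of SL(2,ℝ) whose orbits of the basepoint coincide: Γ₁•o = Γ₂•o. Then Γ₁ and Γ₂ are commensurable: the subgroup Γ₁ ∩ Γ₂ has finite index in both Γ₁ and Γ₂. -/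
noncomputable section

open UpperHalfPlane MeasureTheory Topology Filter Metric Set Pointwise

local notation "SL2R" => Matrix.SpecialLinearGroup (Fin 2) ℝ

/-! If `Λ = Γ₁ • o = Γ₂ • o` contains a point `l ≠ o`, every `γ ∈ Γ₂` can be written `γ = t c`
with `c ∈ Γ₁` and `t` fixing `o` and sending `l` into `Λ`. By discreteness only finitely many
points of `Λ` lie at distance `d(o, l)` from `o`, and an element of `SL(2,ℝ)` fixing two points is
`±1`, so only finitely many `t` occur: `Γ₂` is covered by finitely many cosets `t Γ₁`.
If instead `Λ = {o}`, the discrete groups fix `o` and are therefore finite. -/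

open MulAction

section GroupAction

variable {G X : Type*} [Group G] [MulAction G X]

theorem Subgroup.relIndex_ne_zero_of_subset_mul {H K : Subgroup G} {T : Set G} (hT : T.Finite)
    (hK : (K : Set G) ⊆ T * H) : H.relIndex K ≠ 0 := by
  let φ : K ⧸ H.subgroupOf K → G ⧸ H :=
    Quotient.map' Subtype.val fun a b hab => by
      simpa [QuotientGroup.leftRel_apply, Subgroup.mem_subgroupOf] using hab
  have hφ : Function.Injective φ := by
    rintro ⟨a⟩ ⟨b⟩ hab
    exact Quotient.sound' <| by
      simpa [QuotientGroup.leftRel_apply, Subgroup.mem_subgroupOf] using Quotient.exact' hab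
  have : Finite (Set.range φ) := by
    refine ((hT.image ((↑) : G → G ⧸ H)).subset ?_).to_subtype
    rintro _ ⟨⟨k⟩, rfl⟩
    obtain ⟨t, ht, h, hh, hth⟩ := hK k.2
    exact ⟨t, ht, QuotientGroup.eq.2 (by simpa [← hth] using hh)⟩
  have := Finite.of_injective_finite_range hφ
  exact Subgroup.index_ne_zero_of_finite

theorem MulAction.finite_setOf_smul_eq_and_smul_mem {x y : X}
    (hfix : (stabilizer G x ⊓ stabilizer G y : Set G).Finite) {F : Set X} (hF : F.Finite) :
    {g : G | g • x = x ∧ g • y ∈ F}.Finite := by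
  refine (hF.biUnion (t := fun z => {g : G | g • x = x ∧ g • y = z}) fun z _ => ?_).subset
    fun g hg => Set.mem_biUnion hg.2 ⟨hg.1, rfl⟩
  rcases Set.eq_empty_or_nonempty {g : G | g • x = x ∧ g • y = z} with h | ⟨g₀, hg₀x, hg₀y⟩
  · simp [h]
  refine (hfix.image (g₀ * ·)).subset fun g ⟨hgx, hgy⟩ => ⟨g₀⁻¹ * g, ?_, mul_inv_cancel_left g₀ g⟩
  simp [mem_stabilizer_iff, mul_smul, hgx, hgy, inv_smul_eq_iff, hg₀x, hg₀y]

theorem MulAction.subset_mul_of_orbit_eq {Γ₁ Γ₂ : Subgroup G} {x y : X}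
    (horb : orbit Γ₁ x = orbit Γ₂ x) (hy : y ∈ orbit Γ₁ x) :
    (Γ₂ : Set G) ⊆ {g : G | g • x = x ∧ g • y ∈ orbit Γ₁ x} * Γ₁ := by
  intro γ hγ
  obtain ⟨c, hc⟩ : (γ⁻¹ • x) ∈ orbit Γ₁ x := horb ▸ ⟨⟨γ⁻¹, inv_mem hγ⟩, rfl⟩
  refine ⟨γ * c, ⟨?_, ?_⟩, (c : G)⁻¹, inv_mem c.2, mul_inv_cancel_right γ c⟩
  · simp [mul_smul, ← Subgroup.smul_def, hc]
  · rw [mul_smul, ← Subgroup.smul_def, horb]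
    exact mem_orbit_of_mem_orbit (⟨γ, hγ⟩ : Γ₂) (horb ▸ mem_orbit_of_mem_orbit c hy)

end GroupAction

theorem Matrix.SpecialLinearGroup.finite_center {n R : Type*} [Fintype n] [DecidableEq n]
    [CommRing R] [IsDomain R] :
    ((Subgroup.center (SpecialLinearGroup n R) : Set (SpecialLinearGroup n R))).Finite := by
  have : NeZero (max (Fintype.card n) 1) := ⟨by positivity⟩
  have : Finite (Subgroup.center (SpecialLinearGroup n R)) :=
    .of_equiv _ center_equiv_rootsOfUnity.symm.toEquiv
  exact Set.toFinite _

/- The matrix topology of the statement is Mathlib's topology on `SL(2,ℝ)`, but not reducibly,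
so instances stated for the latter have to be transferred by hand. -/
theorem topologicalSpace_SL2R_eq :
    (inferInstance : TopologicalSpace SL2R) = Matrix.SpecialLinearGroup.instTopologicalSpace := by
  ext
  rfl

namespace UpperHalfPlane

theorem mem_center_of_smul_eq_self {g : SL2R} {z w : ℍ} (hzw : z ≠ w)
    (hz : g • z = z) (hw : g • w = w) : g ∈ Subgroup.center SL2R := by
  have hdet : 0 < (Matrix.SpecialLinearGroup.mapGL ℝ g).val.det := by simp
  have hGL : Matrix.SpecialLinearGroup.mapGL ℝ g ∈ Subgroup.center (GL (Fin 2) ℝ) := by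
    by_contra hnc
    have hell := isElliptic_of_exists_smul_eq_self hdet hnc ⟨z, hz⟩
    exact hzw (((gl_smul_eq_self_iff_eq_fixedPt hdet hell).1 hz).trans
      ((gl_smul_eq_self_iff_eq_fixedPt hdet hell).1 hw).symm)
  refine Subgroup.mem_center_iff.2 fun h => Matrix.SpecialLinearGroup.mapGL_injective (S := ℝ) ?_
  simpa only [map_mul] using Subgroup.mem_center_iff.1 hGL (Matrix.SpecialLinearGroup.mapGL ℝ h)

theorem finite_stabilizer_inf_stabilizer {z w : ℍ} (hzw : z ≠ w) :
    (stabilizer SL2R z ⊓ stabilizer SL2R w : Set SL2R).Finite :=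
  Matrix.SpecialLinearGroup.finite_center.subset fun _ ⟨hz, hw⟩ =>
    mem_center_of_smul_eq_self hzw hz hw

section DiscreteSubgroup

variable (Γ : Subgroup SL2R) [hΓ : DiscreteTopology Γ]

instance : ProperlyDiscontinuousSMul Γ ℍ :=
  @instProperlyDiscontinuousSL2RSubgroup Γ (topologicalSpace_SL2R_eq ▸ hΓ)

theorem finite_setOf_dist_smul_le (z : ℍ) (r : ℝ) : {γ : Γ | dist (γ • z) z ≤ r}.Finite :=
  (ProperlyDiscontinuousSMul.finite_disjoint_inter_image (Γ := Γ) (isCompact_singleton (x := z))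
    (isCompact_closedBall z r)).subset fun γ hγ => ⟨γ • z, by simp, hγ⟩

theorem finite_orbit_inter_closedBall (z : ℍ) (r : ℝ) : (orbit Γ z ∩ closedBall z r).Finite := by
  refine ((finite_setOf_dist_smul_le Γ z r).image (· • z)).subset ?_
  rintro _ ⟨⟨γ, rfl⟩, hr⟩
  exact ⟨γ, hr, rfl⟩

theorem finite_of_orbit_subset_singleton {z : ℍ} (h : orbit Γ z ⊆ {z}) : Finite Γ :=
  Set.finite_univ_iff.1 <| (finite_setOf_dist_smul_le Γ z 0).subset fun γ _ =>
    (dist_eq_zero.2 (h (mem_orbit z γ))).le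

theorem finite_setOf_smul_eq_and_smul_mem_orbit {z w : ℍ} (hzw : z ≠ w) :
    {g : SL2R | g • z = z ∧ g • w ∈ orbit Γ z}.Finite := by
  refine (finite_setOf_smul_eq_and_smul_mem (finite_stabilizer_inf_stabilizer hzw)
    (finite_orbit_inter_closedBall Γ z (dist w z))).subset fun g ⟨hgz, hgw⟩ => ⟨hgz, hgw, ?_⟩
  rw [mem_closedBall, ← dist_smul g w z, hgz]

end DiscreteSubgroup

theorem relIndex_ne_zero_of_orbit_eq {Γ₁ Γ₂ : Subgroup SL2R} [DiscreteTopology Γ₁]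
    [DiscreteTopology Γ₂] {z : ℍ} (horb : orbit Γ₁ z = orbit Γ₂ z) : Γ₁.relIndex Γ₂ ≠ 0 := by
  by_cases h : orbit Γ₁ z ⊆ {z}
  · have := finite_of_orbit_subset_singleton Γ₂ (horb ▸ h)
    exact Subgroup.index_ne_zero_of_finite
  · obtain ⟨w, hw, hwz⟩ := Set.not_subset.1 h
    exact Subgroup.relIndex_ne_zero_of_subset_mul
      (finite_setOf_smul_eq_and_smul_mem_orbit Γ₁ (Ne.symm hwz)) (subset_mul_of_orbit_eq horb hw)

end UpperHalfPlane

theorem orbitO_eq_orbit (Γ : Subgroup SL2R) : orbitO Γ = orbit Γ o := by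
  ext z
  simp [orbitO, mem_orbit_iff, Subgroup.smul_def]

theorem commensurable_of_orbit_eq_general
    (Γ₁ Γ₂ : Subgroup SL2R)
    (h₁disc : DiscreteTopology Γ₁) (h₂disc : DiscreteTopology Γ₂)
    (horb : orbitO Γ₁ = orbitO Γ₂) :
    (Γ₁ ⊓ Γ₂).relIndex Γ₁ ≠ 0 ∧ (Γ₁ ⊓ Γ₂).relIndex Γ₂ ≠ 0 := by
  rw [orbitO_eq_orbit, orbitO_eq_orbit] at horb
  rw [Subgroup.inf_relIndex_left, Subgroup.inf_relIndex_right]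
  exact ⟨relIndex_ne_zero_of_orbit_eq horb.symm, relIndex_ne_zero_of_orbit_eq horb⟩

/-- Discrete cocompact torsion-free subgroups of `SL(2,ℝ)` with the same orbit of the
basepoint are commensurable. -/
theorem commensurable_of_orbit_eq
    (Γ₁ Γ₂ : Subgroup SL2R)
    (h₁disc : DiscreteTopology Γ₁) (h₂disc : DiscreteTopology Γ₂)
    (h₁cc : IsCocompact Γ₁) (h₂cc : IsCocompact Γ₂)
    (h₁tf : Monoid.IsTorsionFree Γ₁) (h₂tf : Monoid.IsTorsionFree Γ₂)
    (horb : orbitO Γ₁ = orbitO Γ₂) :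
    (Γ₁ ⊓ Γ₂).relIndex Γ₁ ≠ 0 ∧ (Γ₁ ⊓ Γ₂).relIndex Γ₂ ≠ 0 :=
  commensurable_of_orbit_eq_general Γ₁ Γ₂ h₁disc h₂disc horb
end
end

section
/- Let H be a discrete subgroup of SL(2,ℝ) and let Γ ≤ H be a subgroup that is discrete and cocompact (there is a compact K ⊆ ℍ with ℍ = ⋃_{γ∈Γ} γ•K). Then Γ has finite index in H. -/
noncomputable section

open UpperHalfPlane MeasureTheory Topology Filter Metric Set Pointwise

local notation "SL2R" => Matrix.SpecialLinearGroup (Fin 2) ℝ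

/-
The orbit map `g ↦ g • o` of `SL(2,ℝ)` is proper, so a discrete subgroup `H` acts properly
discontinuously on `ℍ`: only finitely many `h ∈ H` satisfy `o ∈ h • K` for the compact set `K`
whose `Γ`-translates cover `ℍ`. Every coset `hΓ` contains such an element: if
`h⁻¹ • o ∈ γ • K` with `γ ∈ Γ`, then `o ∈ (h γ) • K`. Hence `H ⧸ Γ` is finite.
-/

theorem Subgroup.index_subgroupOf_ne_zero_of_iUnion_smul_eq_univ {G X : Type*} [Group G]
    [MulAction G X] [TopologicalSpace X] [Nonempty X] {Γ H : Subgroup G}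
    [ProperlyDiscontinuousSMul H X] (hle : Γ ≤ H) {K : Set X} (hK : IsCompact K)
    (hcov : ⋃ γ : Γ, (γ : G) • K = Set.univ) : (Γ.subgroupOf H).index ≠ 0 := by
  obtain ⟨x⟩ := ‹Nonempty X›
  set F : Set H := {h | ((h • ·) '' K ∩ {x}).Nonempty}
  have hF : F.Finite :=
    ProperlyDiscontinuousSMul.finite_disjoint_inter_image hK isCompact_singleton
  have hcoset : ∀ h : H, ∃ γ ∈ Γ.subgroupOf H, h * γ ∈ F := by
    intro h
    obtain ⟨_, ⟨γ, rfl⟩, k, hk, hγk⟩ : (h : G)⁻¹ • x ∈ ⋃ γ : Γ, (γ : G) • K := hcov ▸ trivial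
    refine ⟨⟨γ, hle γ.2⟩, γ.2, x, ⟨k, hk, ?_⟩, rfl⟩
    change ((h : G) * γ) • k = x
    rw [mul_smul, smul_eq_iff_eq_inv_smul]
    exact hγk
  have : Finite (H ⧸ Γ.subgroupOf H) := by
    refine Set.finite_univ_iff.mp ((hF.image QuotientGroup.mk).subset fun q _ => ?_)
    obtain ⟨h, rfl⟩ := QuotientGroup.mk_surjective q
    obtain ⟨γ, hγ, hhγ⟩ := hcoset h
    exact ⟨h * γ, hhγ, QuotientGroup.mk_mul_of_mem h hγ⟩
  exact Subgroup.index_ne_zero_of_finite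

theorem finite_index_of_cocompact_le_discrete_general
    (H Γ : Subgroup SL2R) (hle : Γ ≤ H)
    (hHdisc : DiscreteTopology H)
    (hΓcc : IsCocompact Γ) :
    (Γ.subgroupOf H).index ≠ 0 := by
  obtain ⟨K, hK, hcov⟩ := hΓcc
  -- the local instance on `SL2R` is definitionally Mathlib's subspace topology
  have := @UpperHalfPlane.instProperlyDiscontinuousSL2RSubgroup H hHdisc
  exact Subgroup.index_subgroupOf_ne_zero_of_iUnion_smul_eq_univ hle hK hcov

/-- A discrete cocompact subgroup of a discrete subgroup of `SL(2,ℝ)` has finite index. -/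
theorem finite_index_of_cocompact_le_discrete
    (H Γ : Subgroup SL2R) (hle : Γ ≤ H)
    (hHdisc : DiscreteTopology H)
    (hΓdisc : DiscreteTopology Γ) (hΓcc : IsCocompact Γ) :
    (Γ.subgroupOf H).index ≠ 0 :=
  finite_index_of_cocompact_le_discrete_general H Γ hle hHdisc hΓcc
end
end

section
/- Let J ⊆ ℝ be a closed bounded interval and let I₁, …, I_N be closed bounded intervals with J ⊆ I₁ ∪ ⋯ ∪ I_N, such that the cover is minimal: no proper subfamily of {I₁, …, I_N} covers J. Then the left endpoints of I₁, …, I_N are pairwise distinct, and if the intervals are indexed so that their left endpoints are strictly increasing, then the odd-indexed intervals are pairwise disjoint and the even-indexed intervals are pairwise disjoint (indeed I_j ∩ I_k = ∅ whenever |j − k| ≥ 2). -/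
/-- In a minimal cover of a closed interval `J = [c,d]` by closed intervals `[a i, b i]`,
the left endpoints are pairwise distinct; and if the intervals are indexed so that their
left endpoints are strictly increasing, then any two intervals whose indices differ by at
least `2` are disjoint (in particular the odd-indexed intervals are pairwise disjoint, as
are the even-indexed ones). -/
theorem minimal_interval_cover_alternate_disjoint
    (N : ℕ) (a b : Fin N → ℝ) (hab : ∀ i, a i ≤ b i)
    (c d : ℝ) (hcd : c ≤ d)
    (hcover : Set.Icc c d ⊆ ⋃ i, Set.Icc (a i) (b i))
    (hmin : ∀ i : Fin N, ¬ Set.Icc c d ⊆ ⋃ j ∈ ({i}ᶜ : Set (Fin N)), Set.Icc (a j) (b j)) :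
    Function.Injective a ∧
      (StrictMono a → ∀ i j : Fin N, (i : ℕ) + 2 ≤ (j : ℕ) →
        Disjoint (Set.Icc (a i) (b i)) (Set.Icc (a j) (b j))) := by
  have key : ∀ i : Fin N, ∃ x, x ∈ Set.Icc (a i) (b i) ∧
      ∀ m : Fin N, m ≠ i → x ∉ Set.Icc (a m) (b m) := by
    intro i
    obtain ⟨x, hx, hnx⟩ := Set.not_subset.1 (hmin i)
    simp only [Set.mem_iUnion, not_exists, Set.mem_compl_iff, Set.mem_singleton_iff] at hnx
    obtain ⟨m, hm⟩ := Set.mem_iUnion.1 (hcover hx)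
    have hmi : m = i := by
      by_contra h
      exact hnx m h hm
    subst hmi
    exact ⟨x, hm, fun k hk => hnx k hk⟩
  constructor
  · intro i j hij
    by_contra hne
    obtain ⟨xi, ⟨hai, hbi⟩, hxi⟩ := key i
    obtain ⟨xj, ⟨haj, hbj⟩, hxj⟩ := key j
    have h1 : xi ∉ Set.Icc (a j) (b j) := hxi j (Ne.symm hne)
    have h2 : xj ∉ Set.Icc (a i) (b i) := hxj i hne
    rw [Set.mem_Icc] at h1 h2
    push_neg at h1 h2
    have hb1 : b j < xi := h1 (hij ▸ hai)
    have hb2 : b i < xj := h2 (hij ▸ haj)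
    linarith
  · intro hmono i j hij
    rw [Set.disjoint_left]
    rintro x ⟨hxi1, hxi2⟩ ⟨hxj1, hxj2⟩
    -- so a j ≤ b i
    have hji : a j ≤ b i := le_trans hxj1 hxi2
    have hkN : (i : ℕ) + 1 < N := by have := j.isLt; omega
    set k : Fin N := ⟨(i : ℕ) + 1, hkN⟩ with hk
    have hik : i < k := by simp [hk, Fin.lt_def]
    have hkj : k < j := by simp [hk, Fin.lt_def]; omega
    have haik : a i < a k := hmono hik
    have hakj : a k < a j := hmono hkj
    obtain ⟨xj, ⟨haj, hbj⟩, hxj⟩ := key j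
    obtain ⟨xk, ⟨hak, hbk⟩, hxk⟩ := key k
    have h1 : xj ∉ Set.Icc (a k) (b k) := hxj k hkj.ne
    have h2 : xk ∉ Set.Icc (a i) (b i) := hxk i hik.ne
    have h3 : xk ∉ Set.Icc (a j) (b j) := hxk j hkj.ne'
    rw [Set.mem_Icc] at h1 h2 h3
    push_neg at h1 h2 h3
    have e1 : b k < xj := h1 (by linarith)
    have e2 : b i < xk := h2 (by linarith)
    have e3 : b j < xk := h3 (by linarith)
    linarith
end
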